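/- Let s be a positive integer and m > 0, and suppose u is m-strongly concave on Ω_{2s}. Let Z, Z* ⊆ V with |Z| ≤ s and |Z*| ≤ s. Then f(Z*) − f(Z) ≤ (1/(2m))·‖(∇u(w^{(Z)}))_{Z* \ Z}‖² − (m/2)·‖(w^{(Z)})_{Z \ Z*}‖². -/

import Mathlib

open scoped RealInnerProductSpace

/-- The support of a vector, as a finset. -/
noncomputable def suppF {V : Type*} [Fintype V] [DecidableEq V]
    (w : EuclideanSpace ℝ V) : Finset V :=
  Finset.univ.filter fun a => w a ≠ 0

/-- The restriction `w_S` of a vector `w` to a set `S` of coordinates: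
it agrees with `w` on `S` and is zero elsewhere. -/
noncomputable def restr {V : Type*} [Fintype V] [DecidableEq V]
    (w : EuclideanSpace ℝ V) (S : Finset V) : EuclideanSpace ℝ V :=
  WithLp.toLp 2 fun a => if a ∈ S then w a else 0

/-!
Put `x = w^{(Z)}`, `y = w^{(Z*)}` and `g = ∇u(x)`. Both supports and that of `y - x` have at most
`2s` elements, so strong concavity gives `u y - u x ≤ ⟪g, y - x⟫ - (m/2)‖y - x‖²`. The right-hand
side splits over coordinates, and by the first-order condition `g` vanishes on `Z`: coordinates in
`Z \ Z*` contribute exactly `-(m/2) x_a²`, those in `Z* \ Z` contribute `g_a y_a - (m/2) y_a²`,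
which is at most `g_a² / (2m)`, and all the others contribute nothing positive.
-/

section Support

variable {V : Type*} [Fintype V] [DecidableEq V]

theorem mem_suppF {w : EuclideanSpace ℝ V} {a : V} : a ∈ suppF w ↔ w a ≠ 0 := by
  simp [suppF]

theorem apply_eq_zero_of_suppF_subset {w : EuclideanSpace ℝ V} {S : Finset V}
    (hw : suppF w ⊆ S) {a : V} (ha : a ∉ S) : w a = 0 :=
  not_not.mp fun h => ha (hw (mem_suppF.mpr h))

theorem suppF_sub_subset_union {x y : EuclideanSpace ℝ V} {S T : Finset V}
    (hx : suppF x ⊆ S) (hy : suppF y ⊆ T) : suppF (x - y) ⊆ S ∪ T := by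
  intro a ha
  by_contra h
  rw [Finset.mem_union, not_or] at h
  refine mem_suppF.mp ha ?_
  rw [PiLp.sub_apply, apply_eq_zero_of_suppF_subset hx h.1,
    apply_eq_zero_of_suppF_subset hy h.2, sub_zero]

theorem restr_apply (w : EuclideanSpace ℝ V) (S : Finset V) (a : V) :
    restr w S a = if a ∈ S then w a else 0 :=
  rfl

end Support

theorem mul_sub_half_mul_sq_le {m : ℝ} (hm : 0 < m) (g t : ℝ) :
    g * t - m / 2 * t ^ 2 ≤ 1 / (2 * m) * g ^ 2 := by
  have key : 0 ≤ (m * t - g) ^ 2 / (2 * m) := by positivity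
  have expand : (m * t - g) ^ 2 / (2 * m) = 1 / (2 * m) * g ^ 2 - (g * t - m / 2 * t ^ 2) := by
    field_simp
    ring
  linarith

theorem inner_sub_half_mul_norm_sq_le {V : Type*} [Fintype V] [DecidableEq V]
    {m : ℝ} (hm : 0 < m) {g x y : EuclideanSpace ℝ V} {Z Zstar : Finset V}
    (hx : suppF x ⊆ Z) (hy : suppF y ⊆ Zstar) (hg : ∀ a ∈ Z, g a = 0) :
    ⟪g, y - x⟫ - m / 2 * ‖y - x‖ ^ 2 ≤
      1 / (2 * m) * ‖restr g (Zstar \ Z)‖ ^ 2 - m / 2 * ‖restr x (Z \ Zstar)‖ ^ 2 := by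
  simp only [PiLp.inner_apply, EuclideanSpace.norm_sq_eq, Real.norm_eq_abs, sq_abs,
    Finset.mul_sum, ← Finset.sum_sub_distrib]
  refine Finset.sum_le_sum fun a _ => ?_
  simp only [restr_apply, PiLp.sub_apply, Finset.mem_sdiff, RCLike.inner_apply, conj_trivial]
  by_cases haZ : a ∈ Z <;> by_cases haZs : a ∈ Zstar
  · simp only [haZ, haZs, hg a haZ, not_true_eq_false, and_false, if_false]
    nlinarith [mul_nonneg hm.le (sq_nonneg (y a - x a))]
  · simp [haZ, haZs, hg a haZ, apply_eq_zero_of_suppF_subset hy haZs]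
  · simp only [haZ, haZs, apply_eq_zero_of_suppF_subset hx haZ, not_false_eq_true, and_true,
      if_true, ite_self, sub_zero]
    nlinarith [mul_sub_half_mul_sq_le hm (g a) (y a)]
  · simp [haZ, haZs, apply_eq_zero_of_suppF_subset hx haZ, apply_eq_zero_of_suppF_subset hy haZs]

theorem stmt7_general {V : Type*} [Fintype V] [DecidableEq V]
    (s : ℕ) (m : ℝ) (hm : 0 < m)
    (u : EuclideanSpace ℝ V → ℝ)
    (hconc : ∀ x y : EuclideanSpace ℝ V,
      (suppF x).card ≤ 2 * s → (suppF y).card ≤ 2 * s → (suppF (x - y)).card ≤ 2 * s →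
      u y - u x - ⟪gradient u x, y - x⟫ ≤ -(m / 2) * ‖y - x‖ ^ 2)
    (w : Finset V → EuclideanSpace ℝ V)
    (hw_supp : ∀ Z : Finset V, suppF (w Z) ⊆ Z)
    (hw_grad : ∀ Z : Finset V, ∀ a ∈ Z, gradient u (w Z) a = 0)
    (Z Zstar : Finset V) (hZ : Z.card ≤ s) (hZstar : Zstar.card ≤ s) :
    (u (w Zstar) - u 0) - (u (w Z) - u 0) ≤
      (1 / (2 * m)) * ‖restr (gradient u (w Z)) (Zstar \ Z)‖ ^ 2
        - (m / 2) * ‖restr (w Z) (Z \ Zstar)‖ ^ 2 := by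
  have hx_card : (suppF (w Z)).card ≤ 2 * s :=
    (Finset.card_le_card (hw_supp Z)).trans (by omega)
  have hy_card : (suppF (w Zstar)).card ≤ 2 * s :=
    (Finset.card_le_card (hw_supp Zstar)).trans (by omega)
  have hdiff_card : (suppF (w Z - w Zstar)).card ≤ 2 * s :=
    ((Finset.card_le_card (suppF_sub_subset_union (hw_supp Z) (hw_supp Zstar))).trans
      (Finset.card_union_le Z Zstar)).trans (by omega)
  have concave_step := hconc _ _ hx_card hy_card hdiff_card
  have quadratic_bound :=
    inner_sub_half_mul_norm_sq_le hm (hw_supp Z) (hw_supp Zstar) (hw_grad Z)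
  linarith

/-- if `u` is `m`-strongly concave on `Ω_{2s}` then for `|Z|, |Z*| ≤ s`,
`f(Z*) - f(Z) ≤ (1/(2m))‖(∇u(w^{(Z)}))_{Z* \ Z}‖² - (m/2)‖(w^{(Z)})_{Z \ Z*}‖²`. -/
theorem stmt7 {V : Type*} [Fintype V] [DecidableEq V]
    (s : ℕ) (hs : 0 < s) (m : ℝ) (hm : 0 < m)
    (u : EuclideanSpace ℝ V → ℝ) (hu : Differentiable ℝ u)
    (hconc : ∀ x y : EuclideanSpace ℝ V,
      (suppF x).card ≤ 2 * s → (suppF y).card ≤ 2 * s → (suppF (x - y)).card ≤ 2 * s →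
      u y - u x - ⟪gradient u x, y - x⟫ ≤ -(m / 2) * ‖y - x‖ ^ 2)
    (w : Finset V → EuclideanSpace ℝ V)
    (hw_supp : ∀ Z : Finset V, suppF (w Z) ⊆ Z)
    (hw_max : ∀ Z : Finset V, ∀ z : EuclideanSpace ℝ V, suppF z ⊆ Z → u z ≤ u (w Z))
    (hw_grad : ∀ Z : Finset V, ∀ a ∈ Z, gradient u (w Z) a = 0)
    (Z Zstar : Finset V) (hZ : Z.card ≤ s) (hZstar : Zstar.card ≤ s) :
    (u (w Zstar) - u 0) - (u (w Z) - u 0) ≤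
      (1 / (2 * m)) * ‖restr (gradient u (w Z)) (Zstar \ Z)‖ ^ 2
        - (m / 2) * ‖restr (w Z) (Z \ Zstar)‖ ^ 2 :=
  stmt7_general s m hm u hconc w hw_supp hw_grad Z Zstar hZ hZstar
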